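/- arXiv:2001.11533 — 6 statements merged into one kernel-verified Lean document; each statement's English description precedes it below -/
import Mathlib

section
/- Let X and Y be positive definite, invertible continuous linear operators on a real Hilbert space H, with continuous inverses X⁻¹ and Y⁻¹. If c ≥ 0 is such that for every u ∈ H with u ≠ 0 one has |Real.log ⟪X u, u⟫ − Real.log ⟪Y u, u⟫| ≤ c, then for every u ≠ 0 one also has |Real.log ⟪X⁻¹ u, u⟫ − Real.log ⟪Y⁻¹ u, u⟫| ≤ c. (This is the pointwise form of the identity d_σ(X, Y) = d_σ(X⁻¹, Y⁻¹) for the spectral distance.) -/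
/-!
Pointwise bounds on the quadratic forms are order relations `X ≤ e^c Y` and `Y ≤ e^c X`, and
operator inversion reverses the order of positive operators. For that, write the inverse form
variationally: for `A ≥ 0` with right inverse `B`,
`⟪B u, u⟫ = max_v (2 ⟪u, v⟫ - ⟪A v, v⟫)`, the maximum being attained at `v = B u`.
Hence `A ≤ C` gives `C⁻¹ ≤ A⁻¹`, and taking logarithms turns the two order relations back into
the bound on `|log ⟪X⁻¹ u, u⟫ - log ⟪Y⁻¹ u, u⟫|`.
-/

open scoped RealInnerProductSpace

namespace Real

theorem abs_log_sub_log_le_iff {a b c : ℝ} (ha : 0 < a) (hb : 0 < b) :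
    |log a - log b| ≤ c ↔ a ≤ exp c * b ∧ b ≤ exp c * a := by
  rw [abs_sub_le_iff, sub_le_iff_le_add, sub_le_iff_le_add, ← log_exp c,
    ← log_mul (exp_pos _).ne' hb.ne', ← log_mul (exp_pos _).ne' ha.ne',
    log_le_log_iff ha (by positivity), log_le_log_iff hb (by positivity), log_exp]

end Real

namespace ContinuousLinearMap

variable {H : Type*} [NormedAddCommGroup H] [InnerProductSpace ℝ H] {A B C D : H →L[ℝ] H}

theorem isPositive_of_inner_pos [CompleteSpace H] (hA : IsSelfAdjoint A)
    (hpos : ∀ u : H, u ≠ 0 → 0 < ⟪A u, u⟫) : A.IsPositive := by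
  refine (isPositive_iff' A).mpr ⟨hA, fun u => ?_⟩
  rcases eq_or_ne u 0 with rfl | hu
  · simp
  · exact (hpos u hu).le

theorem apply_apply_of_comp_eq_one (hAB : A ∘L B = 1) (u : H) : A (B u) = u :=
  congr($hAB u)

theorem inner_rightInverse_pos (hA : ∀ u : H, u ≠ 0 → 0 < ⟪A u, u⟫) (hAB : A ∘L B = 1)
    {u : H} (hu : u ≠ 0) : 0 < ⟪B u, u⟫ := by
  have hBu : B u ≠ 0 := fun h => hu <| by
    rw [← apply_apply_of_comp_eq_one hAB u, h, map_zero]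
  simpa [apply_apply_of_comp_eq_one hAB, real_inner_comm] using hA (B u) hBu

/-- Expanding `0 ≤ ⟪A (v - B u), v - B u⟫`. -/
theorem two_inner_sub_inner_le_inner_rightInverse (hA : A.IsPositive) (hAB : A ∘L B = 1)
    (u v : H) : 2 * ⟪u, v⟫ - ⟪A v, v⟫ ≤ ⟪B u, u⟫ := by
  have hABu := apply_apply_of_comp_eq_one hAB u
  have hsq := hA.inner_nonneg_left (v - B u)
  have hcross : ⟪A v, B u⟫ = ⟪u, v⟫ := by
    rw [hA.inner_left_eq_inner_right, hABu, real_inner_comm]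
  rw [map_sub, hABu, inner_sub_left, inner_sub_right, inner_sub_right, hcross,
    real_inner_comm (B u) u] at hsq
  linarith

theorem inner_rightInverse_le_of_inner_le (hA : A.IsPositive) (hAB : A ∘L B = 1)
    (hCD : C ∘L D = 1) (h : ∀ v : H, ⟪A v, v⟫ ≤ ⟪C v, v⟫) (u : H) :
    ⟪D u, u⟫ ≤ ⟪B u, u⟫ :=
  calc ⟪D u, u⟫ = 2 * ⟪u, D u⟫ - ⟪C (D u), D u⟫ := by
        rw [apply_apply_of_comp_eq_one hCD, real_inner_comm]; ring
    _ ≤ 2 * ⟪u, D u⟫ - ⟪A (D u), D u⟫ := by linarith [h (D u)]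
    _ ≤ ⟪B u, u⟫ := two_inner_sub_inner_le_inner_rightInverse hA hAB u (D u)

theorem inner_rightInverse_le_mul_of_inner_le_mul (hA : A.IsPositive) (hAB : A ∘L B = 1)
    (hCD : C ∘L D = 1) {K : ℝ} (hK : 0 < K) (h : ∀ v : H, ⟪A v, v⟫ ≤ K * ⟪C v, v⟫)
    (u : H) : ⟪D u, u⟫ ≤ K * ⟪B u, u⟫ := by
  have hKCD : (K • C) ∘L (K⁻¹ • D) = 1 := by
    rw [smul_comp, comp_smul, smul_smul, mul_inv_cancel₀ hK.ne', hCD, one_smul]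
  have := inner_rightInverse_le_of_inner_le hA hAB hKCD (by simpa [real_inner_smul_left]) u
  rwa [smul_apply, real_inner_smul_left, inv_mul_le_iff₀ hK] at this

theorem inner_le_exp_mul_of_abs_log_sub_le (hA : ∀ u : H, u ≠ 0 → 0 < ⟪A u, u⟫)
    (hC : ∀ u : H, u ≠ 0 → 0 < ⟪C u, u⟫) {c : ℝ}
    (hd : ∀ u : H, u ≠ 0 → |Real.log ⟪A u, u⟫ - Real.log ⟪C u, u⟫| ≤ c) (v : H) :
    ⟪A v, v⟫ ≤ Real.exp c * ⟪C v, v⟫ ∧ ⟪C v, v⟫ ≤ Real.exp c * ⟪A v, v⟫ := by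
  rcases eq_or_ne v 0 with rfl | hv
  · simp
  · exact (Real.abs_log_sub_log_le_iff (hA v hv) (hC v hv)).mp (hd v hv)

end ContinuousLinearMap

open ContinuousLinearMap in
theorem spectral_distance_inv_general
    {H : Type*} [NormedAddCommGroup H] [InnerProductSpace ℝ H] [CompleteSpace H]
    (X Y Xinv Yinv : H →L[ℝ] H)
    (hXsa : IsSelfAdjoint X) (hXpos : ∀ u : H, u ≠ 0 → 0 < ⟪X u, u⟫)
    (hYsa : IsSelfAdjoint Y) (hYpos : ∀ u : H, u ≠ 0 → 0 < ⟪Y u, u⟫)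
    (hX1 : X.comp Xinv = 1)
    (hY1 : Y.comp Yinv = 1)
    (c : ℝ)
    (hd : ∀ u : H, u ≠ 0 → |Real.log ⟪X u, u⟫ - Real.log ⟪Y u, u⟫| ≤ c) :
    ∀ u : H, u ≠ 0 → |Real.log ⟪Xinv u, u⟫ - Real.log ⟪Yinv u, u⟫| ≤ c := by
  intro u hu
  have hXY := inner_le_exp_mul_of_abs_log_sub_le hXpos hYpos hd
  rw [Real.abs_log_sub_log_le_iff (inner_rightInverse_pos hXpos hX1 hu)
    (inner_rightInverse_pos hYpos hY1 hu)]
  exact ⟨inner_rightInverse_le_mul_of_inner_le_mul (isPositive_of_inner_pos hYsa hYpos) hY1 hX1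
      (Real.exp_pos c) (fun v => (hXY v).2) u,
    inner_rightInverse_le_mul_of_inner_le_mul (isPositive_of_inner_pos hXsa hXpos) hX1 hY1
      (Real.exp_pos c) (fun v => (hXY v).1) u⟩

/-- Spectral distance bounds are preserved under taking inverses:
pointwise form of `d_σ(X, Y) = d_σ(X⁻¹, Y⁻¹)` (one inequality direction,
which by symmetry of the roles gives the identity). -/
theorem spectral_distance_inv
    {H : Type*} [NormedAddCommGroup H] [InnerProductSpace ℝ H] [CompleteSpace H]
    (X Y Xinv Yinv : H →L[ℝ] H)
    (hXsa : IsSelfAdjoint X) (hXpos : ∀ u : H, u ≠ 0 → 0 < ⟪X u, u⟫)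
    (hYsa : IsSelfAdjoint Y) (hYpos : ∀ u : H, u ≠ 0 → 0 < ⟪Y u, u⟫)
    (hX1 : X.comp Xinv = 1) (hX2 : Xinv.comp X = 1)
    (hY1 : Y.comp Yinv = 1) (hY2 : Yinv.comp Y = 1)
    (c : ℝ) (hc : 0 ≤ c)
    (hd : ∀ u : H, u ≠ 0 → |Real.log ⟪X u, u⟫ - Real.log ⟪Y u, u⟫| ≤ c) :
    ∀ u : H, u ≠ 0 → |Real.log ⟪Xinv u, u⟫ - Real.log ⟪Yinv u, u⟫| ≤ c :=
  spectral_distance_inv_general X Y Xinv Yinv hXsa hXpos hYsa hYpos hX1 hY1 c hd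
end

section
/- Let V be a closed subspace of a real Hilbert space H, ι : V →L[ℝ] H the inclusion, π : H →L[ℝ] V the orthogonal projection, and β > 0. For X : V →L[ℝ] V define E(X) = ι ∘ X ∘ π + β⁻¹ • (1 − ι ∘ π). Then: (i) if X is positive definite on V, then E(X) is positive definite on H; and (ii) if X and Y are positive definite on V and c ≥ 0 satisfies |Real.log ⟪X v, v⟫ − Real.log ⟪Y v, v⟫| ≤ c for every v ∈ V with v ≠ 0, then |Real.log ⟪E(X) u, u⟫ − Real.log ⟪E(Y) u, u⟫| ≤ c for every u ∈ H with u ≠ 0. (This is the pointwise form of d_σ(E(X), E(Y)) ≤ d_σ(X, Y).) -/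
open scoped RealInnerProductSpace

/-!
Writing `u = v + w` with `v = π u ∈ V` and `w ∈ Vᗮ`, the quadratic form of `E(X)` splits as
`⟪E(X) u, u⟫ = ⟪X v, v⟫ + β⁻¹ ‖w‖²`. Positivity is then immediate, and the spectral bound follows
because adding the same `t ≥ 0` to two positive numbers can only bring their logarithms closer.
-/

theorem Real.abs_log_add_sub_log_add_le {a b t : ℝ} (ha : 0 < a) (hb : 0 < b) (ht : 0 ≤ t) :
    |log (a + t) - log (b + t)| ≤ |log a - log b| := by
  wlog hab : a ≤ b generalizing a b
  · rw [abs_sub_comm, abs_sub_comm (log a)]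
    exact this hb ha (le_of_not_ge hab)
  rw [abs_sub_comm, abs_of_nonneg (sub_nonneg.2 (log_le_log (by linarith) (by linarith))),
    abs_sub_comm, abs_of_nonneg (sub_nonneg.2 (log_le_log ha hab)), ← log_div (by positivity)
    (by positivity), ← log_div hb.ne' ha.ne']
  refine log_le_log (by positivity) ((div_le_div_iff₀ (by positivity) ha).2 ?_)
  nlinarith

section OrthogonalExtension

variable {H : Type*} [NormedAddCommGroup H] [InnerProductSpace ℝ H]
  (V : Submodule ℝ H) [CompleteSpace V]

/-- `E(X)`: acts as `X` on `V` and as `β⁻¹` on `Vᗮ`, since `1 - ι π` is the projection onto `Vᗮ`. -/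
noncomputable def orthogonalExtension (β : ℝ) (X : V →L[ℝ] V) : H →L[ℝ] H :=
  V.subtypeL ∘L X ∘L V.orthogonalProjectionOnto + β⁻¹ • Vᗮ.starProjection

theorem inner_orthogonalExtension_apply_self (β : ℝ) (X : V →L[ℝ] V) (u : H) :
    ⟪orthogonalExtension V β X u, u⟫ =
      ⟪X (V.orthogonalProjectionOnto u), V.orthogonalProjectionOnto u⟫ +
        β⁻¹ * ‖Vᗮ.orthogonalProjectionOnto u‖ ^ 2 := by
  have := Vᗮ.re_inner_starProjection_eq_normSq u
  rw [RCLike.re_to_real] at this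
  rw [orthogonalExtension, add_apply, smul_apply,
    inner_add_left, real_inner_smul_left, this, ContinuousLinearMap.comp_apply,
    ContinuousLinearMap.comp_apply, Submodule.subtypeL_apply,
    ← V.inner_orthogonalProjectionOnto_eq_of_mem_left]

theorem isSelfAdjoint_orthogonalExtension [CompleteSpace H] (β : ℝ) {X : V →L[ℝ] V}
    (hX : IsSelfAdjoint X) : IsSelfAdjoint (orthogonalExtension V β X) := by
  refine .add ?_ (.smul (.all _) (isSelfAdjoint_starProjection _))
  simpa [V.adjoint_subtypeL] using hX.conj_adjoint V.subtypeL

theorem inner_orthogonalExtension_apply_self_pos {β : ℝ} (hβ : 0 < β) {X : V →L[ℝ] V}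
    (hX : ∀ v : V, v ≠ 0 → 0 < ⟪X v, v⟫) {u : H} (hu : u ≠ 0) :
    0 < ⟪orthogonalExtension V β X u, u⟫ := by
  rw [inner_orthogonalExtension_apply_self]
  by_cases hv : V.orthogonalProjectionOnto u = 0
  · have hw : Vᗮ.orthogonalProjectionOnto u ≠ 0 := by
      intro hw
      apply hu
      rw [← V.starProjection_add_starProjection_orthogonal u, Submodule.starProjection_apply,
        Submodule.starProjection_apply, hv, hw]
      simp
    rw [hv, map_zero, inner_zero_left, zero_add]
    positivity
  · have := hX _ hv
    positivity

theorem abs_log_inner_orthogonalExtension_sub_le {β : ℝ} (hβ : 0 < β) {X Y : V →L[ℝ] V}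
    (hX : ∀ v : V, v ≠ 0 → 0 < ⟪X v, v⟫) (hY : ∀ v : V, v ≠ 0 → 0 < ⟪Y v, v⟫)
    {c : ℝ} (hc : 0 ≤ c) (hXY : ∀ v : V, v ≠ 0 → |Real.log ⟪X v, v⟫ - Real.log ⟪Y v, v⟫| ≤ c)
    (u : H) :
    |Real.log ⟪orthogonalExtension V β X u, u⟫ - Real.log ⟪orthogonalExtension V β Y u, u⟫| ≤
      c := by
  rw [inner_orthogonalExtension_apply_self, inner_orthogonalExtension_apply_self]
  by_cases hv : V.orthogonalProjectionOnto u = 0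
  · simpa [hv] using hc
  · exact (Real.abs_log_add_sub_log_add_le (hX _ hv) (hY _ hv) (by positivity)).trans (hXY _ hv)

end OrthogonalExtension

/-- The coarse-to-fine extension operator
`E(X) = ι X π + β⁻¹ (1 - ι π)` maps positive definite operators to positive
definite operators and is a contraction for the (pointwise) spectral distance:
`d_σ(E(X), E(Y)) ≤ d_σ(X, Y)`. -/
theorem extension_posDef_and_spectral_distance_lipschitz
    {H : Type*} [NormedAddCommGroup H] [InnerProductSpace ℝ H] [CompleteSpace H]
    (V : Submodule ℝ H) [CompleteSpace V]
    (β : ℝ) (hβ : 0 < β)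
    (E : (V →L[ℝ] V) → (H →L[ℝ] H))
    (hE : ∀ X : V →L[ℝ] V,
      E X = V.subtypeL.comp (X.comp V.orthogonalProjectionOnto) +
        β⁻¹ • (1 - V.subtypeL.comp V.orthogonalProjectionOnto)) :
    (∀ X : V →L[ℝ] V, IsSelfAdjoint X → (∀ v : V, v ≠ 0 → 0 < ⟪X v, v⟫) →
      IsSelfAdjoint (E X) ∧ ∀ u : H, u ≠ 0 → 0 < ⟪E X u, u⟫) ∧
    (∀ (X Y : V →L[ℝ] V) (c : ℝ), 0 ≤ c →
      IsSelfAdjoint X → (∀ v : V, v ≠ 0 → 0 < ⟪X v, v⟫) →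
      IsSelfAdjoint Y → (∀ v : V, v ≠ 0 → 0 < ⟪Y v, v⟫) →
      (∀ v : V, v ≠ 0 → |Real.log ⟪X v, v⟫ - Real.log ⟪Y v, v⟫| ≤ c) →
      ∀ u : H, u ≠ 0 → |Real.log ⟪E X u, u⟫ - Real.log ⟪E Y u, u⟫| ≤ c) := by
  obtain rfl : E = orthogonalExtension V β := funext fun X => by
    rw [hE, orthogonalExtension, V.starProjection_orthogonal']
    rfl
  exact ⟨fun X hX hXpos => ⟨isSelfAdjoint_orthogonalExtension V β hX,
      fun u hu => inner_orthogonalExtension_apply_self_pos V hβ hXpos hu⟩,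
    fun X Y c hc _ hXpos _ hYpos hXY u _ =>
      abs_log_inner_orthogonalExtension_sub_le V hβ hXpos hYpos hc hXY u⟩
end

section
/- Let V be a closed subspace of a real Hilbert space H, ι : V →L[ℝ] H the inclusion, π : H →L[ℝ] V the orthogonal projection, and β > 0. If G : V →L[ℝ] V is positive definite, then the two-level preconditioner T = ι ∘ G ∘ π + β • (1 − ι ∘ π) is positive definite on H: T is self-adjoint and ⟪T u, u⟫ > 0 for all u ≠ 0. In particular ⟪T u, u⟫ = ⟪G (π u), π u⟫ + β ‖u − ι (π u)‖². -/
open scoped RealInnerProductSpace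

/-!
With `P = ι π` the orthogonal projection onto `V`, the two-level preconditioner is
`ι G π + β (1 - P)` and `1 - P` is the orthogonal projection onto `Vᗮ`. Both summands are
self-adjoint (the first is a conjugate of `G` by `ι`, since `π = ι†`), and the quadratic form
splits along `H = V ⊕ Vᗮ` as `⟪G (π u), π u⟫ + β ‖(1 - P) u‖²`. A nonzero `u` has a nonzero
component in `V` or in `Vᗮ`, so one of the two terms is positive and the other nonnegative.
-/

namespace Submodule

variable {H : Type*} [NormedAddCommGroup H] [InnerProductSpace ℝ H]

noncomputable def twoLevelPreconditioner (V : Submodule ℝ H) [V.HasOrthogonalProjection]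
    (G : V →L[ℝ] V) (β : ℝ) : H →L[ℝ] H :=
  V.subtypeL ∘L G ∘L V.orthogonalProjectionOnto + β • (1 - V.starProjection)

variable (V : Submodule ℝ H) (G : V →L[ℝ] V) (β : ℝ)

theorem isSelfAdjoint_twoLevelPreconditioner [CompleteSpace H] [CompleteSpace V]
    (hG : IsSelfAdjoint G) : IsSelfAdjoint (V.twoLevelPreconditioner G β) := by
  have hconj : IsSelfAdjoint (V.subtypeL ∘L G ∘L V.orthogonalProjectionOnto) := by
    simpa only [adjoint_subtypeL] using hG.conj_adjoint V.subtypeL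
  rw [twoLevelPreconditioner, ← starProjection_orthogonal']
  exact hconj.add ((IsSelfAdjoint.all β).smul (isSelfAdjoint_starProjection Vᗮ))

theorem inner_twoLevelPreconditioner_apply_self [V.HasOrthogonalProjection] (u : H) :
    ⟪V.twoLevelPreconditioner G β u, u⟫ =
      ⟪G (V.orthogonalProjectionOnto u), V.orthogonalProjectionOnto u⟫ +
        β * ‖u - V.subtypeL (V.orthogonalProjectionOnto u)‖ ^ 2 := by
  have hcoarse : ⟪V.subtypeL (G (V.orthogonalProjectionOnto u)), u⟫ =
      ⟪G (V.orthogonalProjectionOnto u), V.orthogonalProjectionOnto u⟫ :=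
    (inner_orthogonalProjectionOnto_eq_of_mem_left _ u).symm
  have hfine : ⟪Vᗮ.starProjection u, u⟫ = ‖u - V.subtypeL (V.orthogonalProjectionOnto u)‖ ^ 2 := by
    simpa [orthogonalProjectionOnto_orthogonal] using Vᗮ.re_inner_starProjection_eq_normSq u
  rw [twoLevelPreconditioner, ← starProjection_orthogonal', _root_.add_apply, inner_add_left,
    _root_.smul_apply, real_inner_smul_left, ContinuousLinearMap.comp_apply,
    ContinuousLinearMap.comp_apply, hcoarse, hfine]

theorem inner_twoLevelPreconditioner_apply_self_pos [V.HasOrthogonalProjection] (hβ : 0 < β)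
    (hG : ∀ v : V, v ≠ 0 → 0 < ⟪G v, v⟫) {u : H} (hu : u ≠ 0) :
    0 < ⟪V.twoLevelPreconditioner G β u, u⟫ := by
  rw [inner_twoLevelPreconditioner_apply_self]
  by_cases hπ : V.orthogonalProjectionOnto u = 0
  · have hnorm : 0 < ‖u‖ := norm_pos_iff.mpr hu
    simp only [hπ, map_zero, inner_zero_left, sub_zero, zero_add]
    positivity
  · have := hG _ hπ
    positivity

end Submodule

/-- If `G` is positive definite on the coarse space `V`, then the two-level
preconditioner `T = ι G π + β (1 - ι π)` is positive definite on `H`,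
with `⟪T u, u⟫ = ⟪G (π u), π u⟫ + β ‖u - ι (π u)‖²`. -/
theorem twolevel_preconditioner_posDef
    {H : Type*} [NormedAddCommGroup H] [InnerProductSpace ℝ H] [CompleteSpace H]
    (V : Submodule ℝ H) [CompleteSpace V]
    (β : ℝ) (hβ : 0 < β)
    (G : V →L[ℝ] V)
    (hGsa : IsSelfAdjoint G) (hGpos : ∀ v : V, v ≠ 0 → 0 < ⟪G v, v⟫)
    (T : H →L[ℝ] H)
    (hT : T = V.subtypeL.comp (G.comp V.orthogonalProjectionOnto) +
      β • (1 - V.subtypeL.comp V.orthogonalProjectionOnto)) :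
    IsSelfAdjoint T ∧ (∀ u : H, u ≠ 0 → 0 < ⟪T u, u⟫) ∧
      ∀ u : H, ⟪T u, u⟫ =
        ⟪G (V.orthogonalProjectionOnto u), V.orthogonalProjectionOnto u⟫ +
          β * ‖u - V.subtypeL (V.orthogonalProjectionOnto u)‖ ^ 2 := by
  obtain rfl : T = V.twoLevelPreconditioner G β := hT
  exact ⟨V.isSelfAdjoint_twoLevelPreconditioner G β hGsa,
    fun _ hu ↦ V.inner_twoLevelPreconditioner_apply_self_pos G β hβ hGpos hu,
    V.inner_twoLevelPreconditioner_apply_self G β⟩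
end

section
/- Let H_U and H_Y be real Hilbert spaces, V_U ⊆ H_U and V_Y ⊆ H_Y closed subspaces with inclusions ι_U : V_U →L[ℝ] H_U and ι_Y : V_Y →L[ℝ] H_Y, and let π : H_U →L[ℝ] V_U be the orthogonal projection. Let K : H_U →L[ℝ] H_Y and K' : V_U →L[ℝ] V_Y with ‖K‖ ≤ C and ‖K'‖ ≤ C, and suppose a ≥ 0 satisfies ‖K − ι_Y ∘ K' ∘ π‖ ≤ a. For β > 0 set G = K† ∘ K + β • 1 on H_U, G' = (K')† ∘ K' + β • 1 on V_U, and V_op = ι_U ∘ G' ∘ π + β • (1 − ι_U ∘ π). Then for every u ∈ H_U, |⟪(G − V_op) u, u⟫| ≤ 2 C a ‖u‖², and consequently ‖G − V_op‖ ≤ 2 C a. -/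
/-!
Write `B = ι_Y K' π`. Since `π` and `ι_U` are adjoint and `ι_Y† ι_Y = 1`, we get
`B† B = ι_U (K'† K') π`, so the `β`-terms cancel and `G - V_op = K† K - B† B`.
The factorization `K† K - B† B = K† (K - B) + (K - B)† B` then gives
`‖G - V_op‖ ≤ ‖K - B‖ (‖K‖ + ‖B‖) ≤ a (C + C)`, and the quadratic-form bound follows from
the norm bound.
-/

open scoped RealInnerProductSpace InnerProduct

open ContinuousLinearMap

section

variable {𝕜 E F : Type*} [RCLike 𝕜] [NormedAddCommGroup E] [InnerProductSpace 𝕜 E]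
  [NormedAddCommGroup F] [InnerProductSpace 𝕜 F]

theorem Submodule.norm_subtypeL_comp_comp_orthogonalProjectionOnto_le (U : Submodule 𝕜 E)
    [U.HasOrthogonalProjection] (W : Submodule 𝕜 F) (A : U →L[𝕜] W) :
    ‖W.subtypeL ∘L A ∘L U.orthogonalProjectionOnto‖ ≤ ‖A‖ :=
  calc _ ≤ ‖W.subtypeL‖ * (‖A‖ * ‖U.orthogonalProjectionOnto‖) :=
        (opNorm_comp_le _ _).trans (by gcongr; exact opNorm_comp_le _ _)
    _ ≤ 1 * (‖A‖ * 1) := by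
        gcongr
        exacts [W.norm_subtypeL_le, U.orthogonalProjectionOnto_norm_le]
    _ = ‖A‖ := by ring

theorem Submodule.subtypeL_comp_add_smul_one_comp_orthogonalProjectionOnto_add
    (U : Submodule 𝕜 E) [U.HasOrthogonalProjection] (T : U →L[𝕜] U) (β : 𝕜) :
    U.subtypeL ∘L (T + β • 1) ∘L U.orthogonalProjectionOnto +
        β • (1 - U.subtypeL ∘L U.orthogonalProjectionOnto) =
      U.subtypeL ∘L T ∘L U.orthogonalProjectionOnto + β • 1 := by
  ext x
  simp [smul_sub]

theorem ContinuousLinearMap.abs_real_inner_apply_self_le {H : Type*} [NormedAddCommGroup H]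
    [InnerProductSpace ℝ H] (T : H →L[ℝ] H) (u : H) : |⟪T u, u⟫| ≤ ‖T‖ * ‖u‖ ^ 2 :=
  calc |⟪T u, u⟫| ≤ ‖T u‖ * ‖u‖ := abs_real_inner_le_norm _ _
    _ ≤ ‖T‖ * ‖u‖ * ‖u‖ := by gcongr; exact T.le_opNorm u
    _ = ‖T‖ * ‖u‖ ^ 2 := by ring

variable [CompleteSpace E] [CompleteSpace F]

theorem Submodule.adjoint_comp_self_subtypeL_comp_comp_orthogonalProjectionOnto
    (U : Submodule 𝕜 E) [CompleteSpace U] (W : Submodule 𝕜 F) [CompleteSpace W]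
    (A : U →L[𝕜] W) :
    (W.subtypeL ∘L A ∘L U.orthogonalProjectionOnto)† ∘L
        (W.subtypeL ∘L A ∘L U.orthogonalProjectionOnto) =
      U.subtypeL ∘L (A† ∘L A) ∘L U.orthogonalProjectionOnto := by
  ext x
  simp [adjoint_comp, Submodule.adjoint_subtypeL, Submodule.adjoint_orthogonalProjectionOnto]

theorem ContinuousLinearMap.norm_adjoint_comp_self_sub_adjoint_comp_self_le (A B : E →L[𝕜] F) :
    ‖A† ∘L A - B† ∘L B‖ ≤ ‖A - B‖ * (‖A‖ + ‖B‖) := by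
  have hsplit : A† ∘L A - B† ∘L B = A† ∘L (A - B) + (A - B)† ∘L B := by
    simp only [comp_sub, map_sub, sub_comp]
    abel
  calc ‖A† ∘L A - B† ∘L B‖ ≤ ‖A†‖ * ‖A - B‖ + ‖(A - B)†‖ * ‖B‖ := by
        rw [hsplit]
        exact (norm_add_le _ _).trans (add_le_add (opNorm_comp_le _ _) (opNorm_comp_le _ _))
    _ = ‖A - B‖ * (‖A‖ + ‖B‖) := by
        simp only [LinearIsometryEquiv.norm_map]
        ring

end

theorem twolevel_hessian_approximation_general
    {HU HY : Type*} [NormedAddCommGroup HU] [InnerProductSpace ℝ HU] [CompleteSpace HU]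
    [NormedAddCommGroup HY] [InnerProductSpace ℝ HY] [CompleteSpace HY]
    (VU : Submodule ℝ HU) [CompleteSpace VU]
    (VY : Submodule ℝ HY) [CompleteSpace VY]
    (K : HU →L[ℝ] HY) (K' : VU →L[ℝ] VY) (C a : ℝ)
    (hKC : ‖K‖ ≤ C) (hK'C : ‖K'‖ ≤ C)
    (ha : ‖K - VY.subtypeL.comp (K'.comp VU.orthogonalProjection)‖ ≤ a)
    (β : ℝ)
    (G : HU →L[ℝ] HU)
    (hG : G = (ContinuousLinearMap.adjoint K).comp K + β • 1)
    (G' : VU →L[ℝ] VU)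
    (hG' : G' = (ContinuousLinearMap.adjoint K').comp K' + β • 1)
    (Vop : HU →L[ℝ] HU)
    (hVop : Vop = VU.subtypeL.comp (G'.comp VU.orthogonalProjection) +
      β • (1 - VU.subtypeL.comp VU.orthogonalProjection)) :
    (∀ u : HU, |⟪(G - Vop) u, u⟫| ≤ 2 * C * a * ‖u‖ ^ 2) ∧ ‖G - Vop‖ ≤ 2 * C * a := by
  set B := VY.subtypeL ∘L K' ∘L VU.orthogonalProjectionOnto
  have hdiff : G - Vop = K† ∘L K - B† ∘L B := by
    rw [hG, hVop, hG', VU.subtypeL_comp_add_smul_one_comp_orthogonalProjectionOnto_add,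
      VU.adjoint_comp_self_subtypeL_comp_comp_orthogonalProjectionOnto]
    abel
  have hnorm : ‖G - Vop‖ ≤ 2 * C * a :=
    calc ‖G - Vop‖ ≤ ‖K - B‖ * (‖K‖ + ‖B‖) :=
          hdiff ▸ K.norm_adjoint_comp_self_sub_adjoint_comp_self_le B
      _ ≤ a * (C + C) := by
          gcongr
          · exact (norm_nonneg _).trans ha
          · exact (VU.norm_subtypeL_comp_comp_orthogonalProjectionOnto_le VY K').trans hK'C
      _ = 2 * C * a := by ring
  exact ⟨fun u => ((G - Vop).abs_real_inner_apply_self_le u).trans (by gcongr), hnorm⟩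

/-- Two-level approximation of the reduced Hessian: if `‖K‖, ‖K'‖ ≤ C` and
`‖K - ι_Y K' π‖ ≤ a`, then the reduced Hessian `G = K†K + β` and the two-level
operator `V_op = ι_U G' π + β (1 - ι_U π)` satisfy
`|⟪(G - V_op) u, u⟫| ≤ 2 C a ‖u‖²` and `‖G - V_op‖ ≤ 2 C a`. -/
theorem twolevel_hessian_approximation
    {HU HY : Type*} [NormedAddCommGroup HU] [InnerProductSpace ℝ HU] [CompleteSpace HU]
    [NormedAddCommGroup HY] [InnerProductSpace ℝ HY] [CompleteSpace HY]
    (VU : Submodule ℝ HU) [CompleteSpace VU]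
    (VY : Submodule ℝ HY) [CompleteSpace VY]
    (K : HU →L[ℝ] HY) (K' : VU →L[ℝ] VY) (C a : ℝ)
    (hKC : ‖K‖ ≤ C) (hK'C : ‖K'‖ ≤ C) (ha0 : 0 ≤ a)
    (ha : ‖K - VY.subtypeL.comp (K'.comp VU.orthogonalProjection)‖ ≤ a)
    (β : ℝ) (hβ : 0 < β)
    (G : HU →L[ℝ] HU)
    (hG : G = (ContinuousLinearMap.adjoint K).comp K + β • 1)
    (G' : VU →L[ℝ] VU)
    (hG' : G' = (ContinuousLinearMap.adjoint K').comp K' + β • 1)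
    (Vop : HU →L[ℝ] HU)
    (hVop : Vop = VU.subtypeL.comp (G'.comp VU.orthogonalProjection) +
      β • (1 - VU.subtypeL.comp VU.orthogonalProjection)) :
    (∀ u : HU, |⟪(G - Vop) u, u⟫| ≤ 2 * C * a * ‖u‖ ^ 2) ∧ ‖G - Vop‖ ≤ 2 * C * a :=
  twolevel_hessian_approximation_general VU VY K K' C a hKC hK'C ha β G hG G' hG' Vop hVop
end

section
/- Let H_U, H_Y be real Hilbert spaces, V_U ⊆ H_U, V_Y ⊆ H_Y closed subspaces with inclusions ι_U, ι_Y and orthogonal projection π : H_U →L[ℝ] V_U. Let K : H_U →L[ℝ] H_Y, K' : V_U →L[ℝ] V_Y with ‖K‖ ≤ C, ‖K'‖ ≤ C and ‖K − ι_Y ∘ K' ∘ π‖ ≤ a; let β > 0 with 4 C a ≤ β and set b := 4 β⁻¹ C a. Let G = K† ∘ K + β • 1 with continuous inverse G⁻¹, and G' = (K')† ∘ K' + β • 1 with continuous inverse (G')⁻¹. Let W' : V_U →L[ℝ] V_U be positive definite with |Real.log ⟪W' v, v⟫ − Real.log ⟪(G')⁻¹ v, v⟫| ≤ d for all v ≠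 0, where d ≥ 0. Then for every u ∈ H_U with u ≠ 0, |Real.log ⟪E(W') u, u⟫ − Real.log ⟪G⁻¹ u, u⟫| ≤ d + b, where E(W') = ι_U ∘ W' ∘ π + β⁻¹ • (1 − ι_U ∘ π). -/
/-!
Write `K̃ = ι_Y ∘ K' ∘ π`. The regularized normal operator `K̃† K̃ + β` acts as `G'` on `V_U`
and as `β` on `V_Uᗮ`, so its inverse is `E((G')⁻¹)`. The quadratic form of `E(T)` at `u` is that
of `T` at `π u` plus the common term `β⁻¹ ‖u - π u‖²`, and adding the same nonnegative number to
two positive numbers only shrinks their log-ratio: hence `d_σ(E(W'), E((G')⁻¹)) ≤ d`.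

On the fine side, `|‖K x‖² - ‖K̃ x‖²| ≤ 2 C a ‖x‖²`, so the quadratic forms of `G` and
`K̃† K̃ + β` agree up to the factor `t = 1 + 2 C a / β`. Inverting positive operators preserves
such two-sided bounds (variational characterization of `⟪A⁻¹ u, u⟫`), so
`d_σ(G⁻¹, E((G')⁻¹)) ≤ log t ≤ 2 C a / β ≤ b`, and the triangle inequality concludes.
-/

open scoped RealInnerProductSpace

namespace Real

lemma abs_log_sub_log_le_log {x y t : ℝ} (hx : 0 < x) (hy : 0 < y)
    (hxy : x ≤ t * y) (hyx : y ≤ t * x) : |log x - log y| ≤ log t := by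
  have ht : 0 < t := pos_of_mul_pos_left (hx.trans_le hxy) hy.le
  rw [abs_sub_le_iff, sub_le_iff_le_add, sub_le_iff_le_add, ← log_mul ht.ne' hy.ne',
    ← log_mul ht.ne' hx.ne']
  exact ⟨log_le_log hx hxy, log_le_log hy hyx⟩

lemma abs_log_add_sub_log_add_le_s10 {x y c : ℝ} (hx : 0 < x) (hy : 0 < y) (hc : 0 ≤ c) :
    |log (x + c) - log (y + c)| ≤ |log x - log y| := by
  wlog hyx : y ≤ x generalizing x y
  · rw [abs_sub_comm, abs_sub_comm (log x)]
    exact this hy hx (le_of_not_ge hyx)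
  rw [← log_div (by positivity) (by positivity), ← log_div hx.ne' hy.ne',
    abs_of_nonneg (log_nonneg ((one_le_div (by positivity)).2 (by linarith))),
    abs_of_nonneg (log_nonneg ((one_le_div hy).2 hyx))]
  refine log_le_log (by positivity) ?_
  rw [div_le_div_iff₀ (by positivity) hy]
  nlinarith

end Real

namespace ContinuousLinearMap

section Inverse

variable {E : Type*} [NormedAddCommGroup E] [InnerProductSpace ℝ E]

/-- Expand `0 ≤ ⟪A (y - x), y - x⟫`. -/
lemma IsPositive.two_mul_inner_sub_inner_le {A : E →L[ℝ] E} (hA : A.IsPositive)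
    {u y : E} (hy : A y = u) (x : E) : 2 * ⟪u, x⟫ - ⟪A x, x⟫ ≤ ⟪y, u⟫ := by
  have h := hA.re_inner_nonneg_left (y - x)
  have hsymm := hA.inner_left_eq_inner_right x y
  rw [hy] at hsymm
  simp only [RCLike.re_to_real, map_sub, inner_sub_left, inner_sub_right, hy] at h
  linarith [real_inner_comm u y, real_inner_comm u x]

lemma inner_inv_apply_self_pos {A Ainv : E →L[ℝ] E} (hA : ∀ x, x ≠ 0 → 0 < ⟪A x, x⟫)
    (hAinv : A ∘L Ainv = 1) {u : E} (hu : u ≠ 0) : 0 < ⟪Ainv u, u⟫ := by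
  have hAu : A (Ainv u) = u := by simpa using congr($hAinv u)
  have hne : Ainv u ≠ 0 := fun h => hu (by rw [← hAu, h, map_zero])
  simpa [hAu, real_inner_comm] using hA _ hne

lemma inner_inv_apply_self_le {A B Ainv Binv : E →L[ℝ] E} (hA : A.IsPositive)
    (hAinv : A ∘L Ainv = 1) (hBinv : B ∘L Binv = 1) {t : ℝ} (ht : 0 < t)
    (hAB : ∀ x, ⟪A x, x⟫ ≤ t * ⟪B x, x⟫) (u : E) :
    ⟪Binv u, u⟫ ≤ t * ⟪Ainv u, u⟫ := by
  have hAu : A (Ainv u) = u := by simpa using congr($hAinv u)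
  have hBu : B (Binv u) = u := by simpa using congr($hBinv u)
  -- test the variational bound for `⟪Ainv u, u⟫` at `x = t⁻¹ • Binv u`
  have hvar := hA.two_mul_inner_sub_inner_le hAu (t⁻¹ • Binv u)
  rw [map_smul, real_inner_smul_left, real_inner_smul_right, real_inner_smul_right,
    real_inner_comm (Binv u) u] at hvar
  have hB : t⁻¹ * ⟪A (Binv u), Binv u⟫ ≤ ⟪Binv u, u⟫ := by
    rw [inv_mul_le_iff₀ ht]
    simpa [hBu, real_inner_comm] using hAB (Binv u)
  have key : t⁻¹ * ⟪Binv u, u⟫ ≤ ⟪Ainv u, u⟫ := by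
    linarith [mul_le_mul_of_nonneg_left hB (inv_nonneg.2 ht.le)]
  rwa [inv_mul_le_iff₀ ht] at key

end Inverse

lemma sq_norm_apply_le_sq_norm_apply_add {E F : Type*} [SeminormedAddCommGroup E]
    [NormedSpace ℝ E] [SeminormedAddCommGroup F] [NormedSpace ℝ F] {K L : E →L[ℝ] F}
    {C a : ℝ} (hK : ‖K‖ ≤ C) (hL : ‖L‖ ≤ C) (hKL : ‖K - L‖ ≤ a) (x : E) :
    ‖K x‖ ^ 2 ≤ ‖L x‖ ^ 2 + 2 * C * a * ‖x‖ ^ 2 := by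
  have hdiff : ‖K x‖ - ‖L x‖ ≤ a * ‖x‖ :=
    (norm_sub_norm_le _ _).trans ((K - L).le_opNorm x |>.trans (by gcongr))
  have hsum : ‖K x‖ + ‖L x‖ ≤ 2 * C * ‖x‖ := by
    linarith [K.le_of_opNorm_le hK x, L.le_of_opNorm_le hL x]
  have ha : 0 ≤ a := (norm_nonneg _).trans hKL
  calc ‖K x‖ ^ 2 = ‖L x‖ ^ 2 + (‖K x‖ - ‖L x‖) * (‖K x‖ + ‖L x‖) := by ring
    _ ≤ ‖L x‖ ^ 2 + a * ‖x‖ * (2 * C * ‖x‖) := by gcongr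
    _ = ‖L x‖ ^ 2 + 2 * C * a * ‖x‖ ^ 2 := by ring

section Regularized

variable {E F : Type*} [NormedAddCommGroup E] [InnerProductSpace ℝ E] [CompleteSpace E]
  [NormedAddCommGroup F] [InnerProductSpace ℝ F] [CompleteSpace F]

lemma inner_adjoint_comp_self_add_smul_apply_self (K : E →L[ℝ] F) (β : ℝ) (x : E) :
    ⟪(adjoint K ∘L K + β • 1) x, x⟫ = ‖K x‖ ^ 2 + β * ‖x‖ ^ 2 := by
  simp [inner_add_left, real_inner_smul_left, adjoint_inner_left]

lemma inner_adjoint_comp_self_add_smul_apply_self_pos (K : E →L[ℝ] F) {β : ℝ} (hβ : 0 < β)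
    {x : E} (hx : x ≠ 0) : 0 < ⟪(adjoint K ∘L K + β • 1) x, x⟫ := by
  rw [inner_adjoint_comp_self_add_smul_apply_self]
  have := norm_pos_iff.2 hx
  positivity

lemma isPositive_adjoint_comp_self_add_smul_one (K : E →L[ℝ] F) {β : ℝ} (hβ : 0 ≤ β) :
    (adjoint K ∘L K + β • 1).IsPositive :=
  (isPositive_adjoint_comp_self K).add (isPositive_one.smul_of_nonneg hβ)

lemma inner_adjoint_comp_self_add_smul_apply_self_le {K L : E →L[ℝ] F} {C a β : ℝ}
    (hK : ‖K‖ ≤ C) (hL : ‖L‖ ≤ C) (hKL : ‖K - L‖ ≤ a) (hβ : 0 < β) (x : E) :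
    ⟪(adjoint K ∘L K + β • 1) x, x⟫ ≤
      (1 + 2 * C * a / β) * ⟪(adjoint L ∘L L + β • 1) x, x⟫ := by
  have hC : 0 ≤ C := (norm_nonneg K).trans hK
  have ha : 0 ≤ a := (norm_nonneg _).trans hKL
  have hCa : 2 * C * a / β * (β * ‖x‖ ^ 2) = 2 * C * a * ‖x‖ ^ 2 := by field_simp
  rw [inner_adjoint_comp_self_add_smul_apply_self, inner_adjoint_comp_self_add_smul_apply_self]
  nlinarith [sq_norm_apply_le_sq_norm_apply_add hK hL hKL x,
    mul_nonneg (by positivity : 0 ≤ 2 * C * a / β) (sq_nonneg ‖L x‖)]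

lemma abs_log_inner_inv_sub_log_inner_inv_le {K L : E →L[ℝ] F} {C a β : ℝ}
    (hK : ‖K‖ ≤ C) (hL : ‖L‖ ≤ C) (hKL : ‖K - L‖ ≤ a) (hβ : 0 < β) {A B : E →L[ℝ] E}
    (hA : (adjoint K ∘L K + β • 1) ∘L A = 1) (hB : (adjoint L ∘L L + β • 1) ∘L B = 1)
    {u : E} (hu : u ≠ 0) :
    |Real.log ⟪A u, u⟫ - Real.log ⟪B u, u⟫| ≤ Real.log (1 + 2 * C * a / β) := by
  have hC : 0 ≤ C := (norm_nonneg K).trans hK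
  have ha : 0 ≤ a := (norm_nonneg _).trans hKL
  have ht : 0 < 1 + 2 * C * a / β := by positivity
  refine Real.abs_log_sub_log_le_log
    (inner_inv_apply_self_pos
      (fun _ => inner_adjoint_comp_self_add_smul_apply_self_pos K hβ) hA hu)
    (inner_inv_apply_self_pos
      (fun _ => inner_adjoint_comp_self_add_smul_apply_self_pos L hβ) hB hu)
    (inner_inv_apply_self_le (isPositive_adjoint_comp_self_add_smul_one L hβ.le) hB hA ht
      (inner_adjoint_comp_self_add_smul_apply_self_le hL hK (norm_sub_rev K L ▸ hKL) hβ) u)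
    (inner_inv_apply_self_le (isPositive_adjoint_comp_self_add_smul_one K hβ.le) hA hB ht
      (inner_adjoint_comp_self_add_smul_apply_self_le hK hL hKL hβ) u)

end Regularized

end ContinuousLinearMap

namespace Submodule

section ExtendScalar

variable {E : Type*} [NormedAddCommGroup E] [InnerProductSpace ℝ E]
  (V : Submodule ℝ E) [V.HasOrthogonalProjection]

/-- `T` on `V` and `c • id` on `Vᗮ`; the operator `E(T)` of the multilevel scheme is
`V.extendScalar β⁻¹ T`. -/
noncomputable def extendScalar (c : ℝ) (T : V →L[ℝ] V) : E →L[ℝ] E :=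
  V.subtypeL ∘L T ∘L V.orthogonalProjectionOnto +
    c • (1 - V.subtypeL ∘L V.orthogonalProjectionOnto)

variable {V}

lemma extendScalar_apply (c : ℝ) (T : V →L[ℝ] V) (x : E) :
    V.extendScalar c T x =
      T (V.orthogonalProjectionOnto x) + c • (x - V.orthogonalProjectionOnto x) :=
  rfl

lemma orthogonalProjectionOnto_extendScalar_apply (c : ℝ) (T : V →L[ℝ] V) (x : E) :
    V.orthogonalProjectionOnto (V.extendScalar c T x) = T (V.orthogonalProjectionOnto x) := by
  simp [extendScalar_apply, orthogonalProjectionOnto_mem_subspace_eq_self,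
    orthogonalProjectionOnto_starProjection_of_le le_rfl]

lemma extendScalar_comp (c d : ℝ) (A B : V →L[ℝ] V) :
    V.extendScalar c A ∘L V.extendScalar d B = V.extendScalar (c * d) (A ∘L B) := by
  ext x
  simp only [ContinuousLinearMap.comp_apply, extendScalar_apply (c := c),
    orthogonalProjectionOnto_extendScalar_apply]
  simp [extendScalar_apply, smul_smul]

lemma extendScalar_one_one : V.extendScalar 1 (1 : V →L[ℝ] V) = 1 := by
  ext x
  simp [extendScalar_apply]

lemma inner_extendScalar_apply_self (c : ℝ) (T : V →L[ℝ] V) (x : E) :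
    ⟪V.extendScalar c T x, x⟫ =
      ⟪T (V.orthogonalProjectionOnto x), V.orthogonalProjectionOnto x⟫ +
        c * ‖x - V.orthogonalProjectionOnto x‖ ^ 2 := by
  have hT : ⟪(T (V.orthogonalProjectionOnto x) : E), x⟫ =
      ⟪T (V.orthogonalProjectionOnto x), V.orthogonalProjectionOnto x⟫ :=
    (inner_orthogonalProjectionOnto_eq_of_mem_left _ x).symm
  have hperp : ⟪x - V.orthogonalProjectionOnto x, x⟫ =
      ‖x - V.orthogonalProjectionOnto x‖ ^ 2 := by
    have h0 : ⟪x - V.orthogonalProjectionOnto x, (V.orthogonalProjectionOnto x : E)⟫ = 0 :=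
      starProjection_inner_eq_zero x _ (coe_mem _)
    rw [← real_inner_self_eq_norm_sq, inner_sub_right _ x, h0, sub_zero]
  rw [extendScalar_apply, inner_add_left, real_inner_smul_left, hT, hperp]

lemma abs_log_inner_extendScalar_sub_le {S T : V →L[ℝ] V} (hS : ∀ v, v ≠ 0 → 0 < ⟪S v, v⟫)
    (hT : ∀ v, v ≠ 0 → 0 < ⟪T v, v⟫) {c d : ℝ} (hc : 0 ≤ c) (hd : 0 ≤ d)
    (hST : ∀ v, v ≠ 0 → |Real.log ⟪S v, v⟫ - Real.log ⟪T v, v⟫| ≤ d) (x : E) :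
    |Real.log ⟪V.extendScalar c S x, x⟫ - Real.log ⟪V.extendScalar c T x, x⟫| ≤ d := by
  rw [inner_extendScalar_apply_self, inner_extendScalar_apply_self]
  rcases eq_or_ne (V.orthogonalProjectionOnto x) 0 with h | h
  · simp [h, hd]
  · exact (Real.abs_log_add_sub_log_add_le_s10 (hS _ h) (hT _ h) (by positivity)).trans (hST _ h)

end ExtendScalar

variable {E F : Type*} [NormedAddCommGroup E] [InnerProductSpace ℝ E]
  [NormedAddCommGroup F] [InnerProductSpace ℝ F]

lemma norm_subtypeL_comp_comp_orthogonalProjectionOnto_le_s10 {V : Submodule ℝ E}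
    [V.HasOrthogonalProjection] (W : Submodule ℝ F) (K : V →L[ℝ] W) :
    ‖W.subtypeL ∘L K ∘L V.orthogonalProjectionOnto‖ ≤ ‖K‖ :=
  calc _ ≤ ‖W.subtypeL‖ * (‖K‖ * ‖V.orthogonalProjectionOnto‖) :=
        (ContinuousLinearMap.opNorm_comp_le _ _).trans
          (by gcongr; exact ContinuousLinearMap.opNorm_comp_le _ _)
    _ ≤ 1 * (‖K‖ * 1) := by
        gcongr
        exacts [norm_subtypeL_le W, orthogonalProjectionOnto_norm_le V]
    _ = ‖K‖ := by ring

lemma extendScalar_adjoint_comp_self_add_smul_one [CompleteSpace E] [CompleteSpace F]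
    {V : Submodule ℝ E} [CompleteSpace V] (W : Submodule ℝ F) [CompleteSpace W]
    (K : V →L[ℝ] W) (β : ℝ) :
    V.extendScalar β (ContinuousLinearMap.adjoint K ∘L K + β • 1) =
      ContinuousLinearMap.adjoint (W.subtypeL ∘L K ∘L V.orthogonalProjectionOnto) ∘L
        (W.subtypeL ∘L K ∘L V.orthogonalProjectionOnto) + β • 1 := by
  ext x
  simp [extendScalar_apply, ContinuousLinearMap.adjoint_comp, adjoint_subtypeL,
    adjoint_orthogonalProjectionOnto, orthogonalProjectionOnto_mem_subspace_eq_self]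
  rw [add_assoc, ← smul_add, add_sub_cancel]

end Submodule

theorem multilevel_finest_level_bound_general
    {HU HY : Type*} [NormedAddCommGroup HU] [InnerProductSpace ℝ HU] [CompleteSpace HU]
    [NormedAddCommGroup HY] [InnerProductSpace ℝ HY] [CompleteSpace HY]
    (VU : Submodule ℝ HU) [CompleteSpace VU]
    (VY : Submodule ℝ HY) [CompleteSpace VY]
    (K : HU →L[ℝ] HY) (K' : VU →L[ℝ] VY) (C a : ℝ)
    (hKC : ‖K‖ ≤ C) (hK'C : ‖K'‖ ≤ C)
    (ha : ‖K - VY.subtypeL.comp (K'.comp VU.orthogonalProjectionOnto)‖ ≤ a)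
    (β : ℝ) (hβ : 0 < β)
    (b : ℝ) (hb : b = 4 * β⁻¹ * C * a)
    (G Ginv : HU →L[ℝ] HU)
    (hG : G = (ContinuousLinearMap.adjoint K).comp K + β • 1)
    (hG1 : G.comp Ginv = 1)
    (G' G'inv : VU →L[ℝ] VU)
    (hG' : G' = (ContinuousLinearMap.adjoint K').comp K' + β • 1)
    (hG'1 : G'.comp G'inv = 1)
    (W' : VU →L[ℝ] VU)
    (hW'pos : ∀ v : VU, v ≠ 0 → 0 < ⟪W' v, v⟫)
    (d : ℝ) (hd0 : 0 ≤ d)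
    (hW'd : ∀ v : VU, v ≠ 0 → |Real.log ⟪W' v, v⟫ - Real.log ⟪G'inv v, v⟫| ≤ d)
    (EW' : HU →L[ℝ] HU)
    (hEW' : EW' = VU.subtypeL.comp (W'.comp VU.orthogonalProjectionOnto) +
      β⁻¹ • (1 - VU.subtypeL.comp VU.orthogonalProjectionOnto)) :
    ∀ u : HU, u ≠ 0 →
      |Real.log ⟪EW' u, u⟫ - Real.log ⟪Ginv u, u⟫| ≤ d + b := by
  intro u hu
  set Kt := VY.subtypeL ∘L K' ∘L VU.orthogonalProjectionOnto
  set F := VU.extendScalar β⁻¹ G'inv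
  have hF : (ContinuousLinearMap.adjoint Kt ∘L Kt + β • 1) ∘L F = 1 := by
    rw [← Submodule.extendScalar_adjoint_comp_self_add_smul_one, Submodule.extendScalar_comp,
      mul_inv_cancel₀ hβ.ne', ← hG', hG'1, Submodule.extendScalar_one_one]
  have hfine : |Real.log ⟪Ginv u, u⟫ - Real.log ⟪F u, u⟫| ≤ Real.log (1 + 2 * C * a / β) :=
    ContinuousLinearMap.abs_log_inner_inv_sub_log_inner_inv_le hKC
      ((Submodule.norm_subtypeL_comp_comp_orthogonalProjectionOnto_le_s10 VY K').trans hK'C)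
      ha hβ (hG ▸ hG1) hF hu
  have hcoarse : |Real.log ⟪EW' u, u⟫ - Real.log ⟪F u, u⟫| ≤ d :=
    hEW' ▸ Submodule.abs_log_inner_extendScalar_sub_le hW'pos
      (fun _ => ContinuousLinearMap.inner_inv_apply_self_pos
        (fun _ => ContinuousLinearMap.inner_adjoint_comp_self_add_smul_apply_self_pos K' hβ)
        (hG' ▸ hG'1))
      (inv_nonneg.2 hβ.le) hd0 hW'd u
  have hlog : Real.log (1 + 2 * C * a / β) ≤ b := by
    have hC : 0 ≤ C := (norm_nonneg K).trans hKC
    have ha0 : 0 ≤ a := (norm_nonneg _).trans ha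
    refine (Real.log_le_sub_one_of_pos (by positivity)).trans ?_
    rw [hb, add_sub_cancel_left, div_eq_inv_mul]
    linarith [mul_nonneg (mul_nonneg (inv_nonneg.2 hβ.le) hC) ha0]
  calc |Real.log ⟪EW' u, u⟫ - Real.log ⟪Ginv u, u⟫|
      ≤ |Real.log ⟪EW' u, u⟫ - Real.log ⟪F u, u⟫|
          + |Real.log ⟪Ginv u, u⟫ - Real.log ⟪F u, u⟫| := by
        rw [abs_sub_comm (Real.log ⟪Ginv u, u⟫)]
        exact abs_sub_le _ _ _
    _ ≤ d + b := add_le_add hcoarse (hfine.trans hlog)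

/-- Finest-level bound of the multilevel convergence proof:
`d_σ(E(W'), G⁻¹) ≤ d + b` (pointwise form), i.e. `d_0 ≤ d_1 + b_0`. -/
theorem multilevel_finest_level_bound
    {HU HY : Type*} [NormedAddCommGroup HU] [InnerProductSpace ℝ HU] [CompleteSpace HU]
    [NormedAddCommGroup HY] [InnerProductSpace ℝ HY] [CompleteSpace HY]
    (VU : Submodule ℝ HU) [CompleteSpace VU]
    (VY : Submodule ℝ HY) [CompleteSpace VY]
    (K : HU →L[ℝ] HY) (K' : VU →L[ℝ] VY) (C a : ℝ)
    (hKC : ‖K‖ ≤ C) (hK'C : ‖K'‖ ≤ C) (ha0 : 0 ≤ a)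
    (ha : ‖K - VY.subtypeL.comp (K'.comp VU.orthogonalProjectionOnto)‖ ≤ a)
    (β : ℝ) (hβ : 0 < β) (hβa : 4 * C * a ≤ β)
    (b : ℝ) (hb : b = 4 * β⁻¹ * C * a)
    (G Ginv : HU →L[ℝ] HU)
    (hG : G = (ContinuousLinearMap.adjoint K).comp K + β • 1)
    (hG1 : G.comp Ginv = 1) (hG2 : Ginv.comp G = 1)
    (G' G'inv : VU →L[ℝ] VU)
    (hG' : G' = (ContinuousLinearMap.adjoint K').comp K' + β • 1)
    (hG'1 : G'.comp G'inv = 1) (hG'2 : G'inv.comp G' = 1)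
    (W' : VU →L[ℝ] VU)
    (hW'sa : IsSelfAdjoint W') (hW'pos : ∀ v : VU, v ≠ 0 → 0 < ⟪W' v, v⟫)
    (d : ℝ) (hd0 : 0 ≤ d)
    (hW'd : ∀ v : VU, v ≠ 0 → |Real.log ⟪W' v, v⟫ - Real.log ⟪G'inv v, v⟫| ≤ d)
    (EW' : HU →L[ℝ] HU)
    (hEW' : EW' = VU.subtypeL.comp (W'.comp VU.orthogonalProjectionOnto) +
      β⁻¹ • (1 - VU.subtypeL.comp VU.orthogonalProjectionOnto)) :
    ∀ u : HU, u ≠ 0 →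
      |Real.log ⟪EW' u, u⟫ - Real.log ⟪Ginv u, u⟫| ≤ d + b :=
  multilevel_finest_level_bound_general VU VY K K' C a hKC hK'C ha β hβ b hb G Ginv hG hG1 G' G'inv
    hG' hG'1 W' hW'pos d hd0 hW'd EW' hEW'
end

section
/- Let ℓ ≥ 2 be a natural number, let f be a real number with 0 < f ≤ 1, and let 𝕂 be a real number with 0 < 𝕂 ≤ min(0.1, f/8). Let d_0, d_1, …, d_{ℓ-1} and b_0, b_1, …, b_{ℓ-2} be nonnegative real numbers satisfying: d_{ℓ-1} = 0; d_j ≤ 2 (d_{j+1} + b_j)² for every j with 1 ≤ j ≤ ℓ−2; d_0 ≤ d_1 + b_0; and b_j ≤ 𝕂 f^{ℓ−1−j} for every j with 0 ≤ j ≤ ℓ−2. Then d_j ≤ ((1 − 4 𝕂 f⁻¹)/(4 (𝕂 f⁻¹)²)) · (𝕂 f^{ℓ−1−j})² for every j with 1 ≤ j ≤ ℓ−1, in particular d_j < (1/4) f^{2(ℓ−j)} for 1 ≤ j ≤ ℓ−1, and d_0 ≤ (1/4 + 𝕂) f^{ℓ−1}. -/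
/-!
Put `κ = 𝕂 / f ≤ 1/8`. The claimed bound on `d_j` is `(1/4 - κ) f^{2(ℓ-j)}`, and it propagates
downwards from `d_{ℓ-1} = 0`: if `d_{j+1} ≤ (1/4 - κ) G²` with `G = f^{ℓ-1-j} ≤ f` and
`b_j ≤ κ f G`, then `d_{j+1} + b_j ≤ (1/4 - κ) f G + κ f G = f G / 4`, so
`d_j ≤ 2 (f G / 4)² = (f G)² / 8 ≤ (1/4 - κ) (f G)²`.
-/

theorem two_mul_sq_add_le {κ f G d b : ℝ} (hκ : κ ≤ 1 / 8) (hG : 0 ≤ G) (hGf : G ≤ f)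
    (hd0 : 0 ≤ d) (hd : d ≤ (1 / 4 - κ) * G ^ 2) (hb0 : 0 ≤ b) (hb : b ≤ κ * f * G) :
    2 * (d + b) ^ 2 ≤ (1 / 4 - κ) * (f * G) ^ 2 := by
  have hsum : d + b ≤ f * G / 4 :=
    calc d + b ≤ (1 / 4 - κ) * G ^ 2 + κ * f * G := add_le_add hd hb
      _ ≤ (1 / 4 - κ) * (f * G) + κ * f * G := by
        gcongr
        · linarith
        · rw [sq]; gcongr
      _ = f * G / 4 := by ring
  calc 2 * (d + b) ^ 2 ≤ 2 * (f * G / 4) ^ 2 := by gcongr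
    _ = 1 / 8 * (f * G) ^ 2 := by ring
    _ ≤ (1 / 4 - κ) * (f * G) ^ 2 := by gcongr; linarith

theorem le_of_two_mul_sq_recursion {n : ℕ} {κ f : ℝ} {d b : ℕ → ℝ}
    (hκ : κ ≤ 1 / 8) (hf0 : 0 ≤ f) (hf1 : f ≤ 1)
    (hd0 : ∀ j ≤ n, 0 ≤ d j) (hb0 : ∀ j < n, 0 ≤ b j) (htop : d n = 0)
    (hrec : ∀ j, 1 ≤ j → j < n → d j ≤ 2 * (d (j + 1) + b j) ^ 2)
    (hb : ∀ j < n, b j ≤ κ * f ^ (n + 1 - j)) :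
    ∀ j, 1 ≤ j → j ≤ n → d j ≤ (1 / 4 - κ) * (f ^ (n + 1 - j)) ^ 2 := by
  intro j hj hjn
  induction hjn using Nat.decreasingInduction with
  | self => rw [htop]; exact mul_nonneg (by linarith) (sq_nonneg _)
  | of_succ k hkn ih =>
    have hexp : n + 1 - k = n - k + 1 := by omega
    have hG : f ^ (n - k) ≤ f := pow_le_of_le_one hf0 hf1 (by omega)
    calc d k ≤ 2 * (d (k + 1) + b k) ^ 2 := hrec k hj hkn
      _ ≤ (1 / 4 - κ) * (f * f ^ (n - k)) ^ 2 := by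
        refine two_mul_sq_add_le hκ (by positivity) hG (hd0 _ hkn) ?_ (hb0 k hkn) ?_
        · simpa [show n + 1 - (k + 1) = n - k by omega] using ih (by omega)
        · simpa [hexp, pow_succ, mul_assoc, mul_comm f] using hb k hkn
      _ = (1 / 4 - κ) * (f ^ (n + 1 - k)) ^ 2 := by rw [hexp, pow_succ' f]

theorem sub_mul_sq_pow_le {κ f : ℝ} (hκ : 0 ≤ κ) (hf0 : 0 ≤ f) (hf1 : f ≤ 1) (n : ℕ) :
    (1 / 4 - κ) * (f ^ n) ^ 2 ≤ 1 / 4 * f ^ n :=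
  calc (1 / 4 - κ) * (f ^ n) ^ 2 ≤ 1 / 4 * (f ^ n) ^ 2 := by gcongr; linarith
    _ ≤ 1 / 4 * f ^ n := by
      gcongr
      exact pow_le_of_le_one (by positivity) (pow_le_one₀ hf0 hf1) two_ne_zero

/-- Arithmetic induction at the core of the multilevel convergence theorem:
from `d_{ℓ-1} = 0`, `d_j ≤ 2 (d_{j+1} + b_j)²` (intermediate levels),
`d_0 ≤ d_1 + b_0` and `b_j ≤ 𝕂 f^{ℓ-1-j}` one deduces
`d_j ≤ ((1 - 4𝕂/f)/(4(𝕂/f)²)) (𝕂 f^{ℓ-1-j})²`, hence `d_j < (1/4) f^{2(ℓ-j)}`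
for `1 ≤ j ≤ ℓ-1`, and `d_0 ≤ (1/4 + 𝕂) f^{ℓ-1}`. -/
theorem multilevel_arithmetic_induction
    (ℓ : ℕ) (hℓ : 2 ≤ ℓ) (f 𝕂 : ℝ)
    (hf0 : 0 < f) (hf1 : f ≤ 1)
    (h𝕂0 : 0 < 𝕂) (h𝕂 : 𝕂 ≤ min 0.1 (f / 8))
    (d b : ℕ → ℝ)
    (hdnn : ∀ j, j ≤ ℓ - 1 → 0 ≤ d j)
    (hbnn : ∀ j, j ≤ ℓ - 2 → 0 ≤ b j)
    (htop : d (ℓ - 1) = 0)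
    (hrec : ∀ j, 1 ≤ j → j ≤ ℓ - 2 → d j ≤ 2 * (d (j + 1) + b j) ^ 2)
    (h0 : d 0 ≤ d 1 + b 0)
    (hb : ∀ j, j ≤ ℓ - 2 → b j ≤ 𝕂 * f ^ (ℓ - 1 - j)) :
    (∀ j, 1 ≤ j → j ≤ ℓ - 1 →
      d j ≤ (1 - 4 * (𝕂 * f⁻¹)) / (4 * (𝕂 * f⁻¹) ^ 2) * (𝕂 * f ^ (ℓ - 1 - j)) ^ 2) ∧
    (∀ j, 1 ≤ j → j ≤ ℓ - 1 → d j < 1 / 4 * f ^ (2 * (ℓ - j))) ∧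
    d 0 ≤ (1 / 4 + 𝕂) * f ^ (ℓ - 1) := by
  obtain ⟨n, rfl⟩ : ∃ n, ℓ = n + 1 := ⟨ℓ - 1, by omega⟩
  set κ := 𝕂 * f⁻¹ with hκ
  have hκ0 : 0 < κ := by positivity
  have hκ8 : κ ≤ 1 / 8 := by
    rw [hκ, ← div_eq_mul_inv, div_le_iff₀ hf0]
    linarith [min_le_right 0.1 (f / 8)]
  have hshift (k : ℕ) : 𝕂 * f ^ k = κ * f ^ (k + 1) := by
    rw [hκ, pow_succ']; field_simp
  simp only [Nat.add_sub_cancel] at hdnn htop hb ⊢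
  have hbound := le_of_two_mul_sq_recursion hκ8 hf0.le hf1 hdnn
    (fun j hj => hbnn j (by omega)) htop (fun j h1 hj => hrec j h1 (by omega))
    (fun j hj => by rw [show n + 1 - j = n - j + 1 by omega, ← hshift]; exact hb j (by omega))
  refine ⟨fun j h1 hj => ?_, fun j h1 hj => ?_, ?_⟩
  · calc d j ≤ (1 / 4 - κ) * (f ^ (n + 1 - j)) ^ 2 := hbound j h1 hj
      _ = _ := by
        rw [hshift, show n - j + 1 = n + 1 - j by omega]
        field_simp
  · calc d j ≤ (1 / 4 - κ) * (f ^ (n + 1 - j)) ^ 2 := hbound j h1 hj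
      _ < 1 / 4 * f ^ (2 * (n + 1 - j)) := by
        rw [mul_comm 2, pow_mul]
        exact mul_lt_mul_of_pos_right (by linarith) (by positivity)
  · calc d 0 ≤ d 1 + b 0 := h0
      _ ≤ (1 / 4 - κ) * (f ^ n) ^ 2 + 𝕂 * f ^ n :=
        add_le_add (by simpa using hbound 1 le_rfl (by omega)) (by simpa using hb 0 (by omega))
      _ ≤ 1 / 4 * f ^ n + 𝕂 * f ^ n := by grw [sub_mul_sq_pow_le hκ0.le hf0.le hf1]
      _ = (1 / 4 + 𝕂) * f ^ n := by ring
end
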